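/- Let L : ℝ^d → ℝ be differentiable and restricted L_s-smooth at sparsity level s, let S ⊆ {1,…,d} with |S| ≤ s, let θ ∈ ℝ^d with supp(θ) ⊆ S, let g ∈ ℝ^d with supp(g) ⊆ S, let η > 0, and set θ' = θ − η g. Then L(θ') − L(θ) ≤ −(η/2)(1 − η L_s) ‖g|_S‖² + (η/2) ‖g|_S − (∇L(θ))|_S‖². -/

import Mathlib

open scoped BigOperators RealInnerProductSpace

open Classical in
noncomputable def supp {d : ℕ} (x : EuclideanSpace ℝ (Fin d)) : Finset (Fin d) :=
  Finset.univ.filter fun j => x j ≠ 0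

noncomputable def norm0 {d : ℕ} (x : EuclideanSpace ℝ (Fin d)) : ℕ := (supp x).card

noncomputable def restrict {d : ℕ} (x : EuclideanSpace ℝ (Fin d)) (S : Finset (Fin d)) :
    EuclideanSpace ℝ (Fin d) := WithLp.toLp 2 fun j => if j ∈ S then x j else 0

/-! The smoothness inequality at the pair `(θ - η • g, θ)`, both supported in `S`, gives
`L (θ - η • g) - L θ ≤ -η ⟪∇L θ, g⟫ + (Ls / 2) η² ‖g‖²`. Since `g` lives on `S`, the inner product
only sees `(∇L θ)|_S =: r`, and the polarization identity
`-2 ⟪r, g⟫ = ‖g - r‖² - ‖g‖² - ‖r‖² ≤ ‖g - r‖² - ‖g‖²` turns this into the claimed bound. -/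

section Support

variable {d : ℕ}

theorem supp_subset_iff {x : EuclideanSpace ℝ (Fin d)} {S : Finset (Fin d)} :
    supp x ⊆ S ↔ ∀ j ∉ S, x j = 0 := by
  simp only [supp, Finset.subset_iff, Finset.mem_filter, Finset.mem_univ, true_and]
  exact ⟨fun h j hj => by_contra fun hx => hj (h hx), fun h j hx => by_contra fun hj => hx (h j hj)⟩

theorem supp_sub_smul_subset {x y : EuclideanSpace ℝ (Fin d)} {S : Finset (Fin d)}
    (hx : supp x ⊆ S) (hy : supp y ⊆ S) (c : ℝ) : supp (x - c • y) ⊆ S := by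
  rw [supp_subset_iff] at *
  intro j hj
  simp [hx j hj, hy j hj]

theorem norm0_le_of_supp_subset {x : EuclideanSpace ℝ (Fin d)} {S : Finset (Fin d)} {s : ℕ}
    (hx : supp x ⊆ S) (hS : S.card ≤ s) : norm0 x ≤ s :=
  (Finset.card_le_card hx).trans hS

theorem restrict_eq_self {x : EuclideanSpace ℝ (Fin d)} {S : Finset (Fin d)}
    (hx : supp x ⊆ S) : restrict x S = x := by
  ext j
  by_cases hj : j ∈ S
  · simp [restrict, hj]
  · simp [restrict, hj, supp_subset_iff.1 hx j hj]

theorem inner_restrict_left (x y : EuclideanSpace ℝ (Fin d)) (S : Finset (Fin d)) :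
    ⟪restrict y S, x⟫ = ⟪y, restrict x S⟫ := by
  simp only [PiLp.inner_apply, RCLike.inner_apply, conj_trivial, restrict]
  refine Finset.sum_congr rfl fun j _ => ?_
  split_ifs <;> simp

theorem inner_restrict_left_of_supp_subset {x : EuclideanSpace ℝ (Fin d)} {S : Finset (Fin d)}
    (hx : supp x ⊆ S) (y : EuclideanSpace ℝ (Fin d)) : ⟪restrict y S, x⟫ = ⟪y, x⟫ := by
  rw [inner_restrict_left, restrict_eq_self hx]

end Support

theorem neg_inner_le_half_norm_sub_sq_sub {E : Type*} [NormedAddCommGroup E]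
    [InnerProductSpace ℝ E] (r g : E) : -⟪r, g⟫ ≤ (‖g - r‖ ^ 2 - ‖g‖ ^ 2) / 2 := by
  rw [norm_sub_sq_real, real_inner_comm]
  nlinarith [sq_nonneg ‖r‖]

theorem descent_step_bound_general {d s : ℕ} (L : EuclideanSpace ℝ (Fin d) → ℝ) (Ls : ℝ)
    (hsmooth : ∀ θ₁ θ₂ : EuclideanSpace ℝ (Fin d), norm0 θ₁ ≤ s → norm0 θ₂ ≤ s →
      L θ₁ ≤ L θ₂ + ⟪gradient L θ₂, θ₁ - θ₂⟫ + Ls / 2 * ‖θ₁ - θ₂‖ ^ 2)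
    (S : Finset (Fin d)) (hS : S.card ≤ s)
    (θ g : EuclideanSpace ℝ (Fin d)) (hθ : supp θ ⊆ S) (hg : supp g ⊆ S)
    (η : ℝ) (hη : 0 < η) :
    L (θ - η • g) - L θ ≤ -(η / 2) * (1 - η * Ls) * ‖restrict g S‖ ^ 2
      + η / 2 * ‖restrict g S - restrict (gradient L θ) S‖ ^ 2 := by
  have hstep := hsmooth (θ - η • g) θ
    (norm0_le_of_supp_subset (supp_sub_smul_subset hθ hg η) hS) (norm0_le_of_supp_subset hθ hS)
  rw [sub_sub_cancel_left, inner_neg_right, inner_smul_right, norm_neg, norm_smul, mul_pow,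
    Real.norm_eq_abs, sq_abs] at hstep
  have hpolar := neg_inner_le_half_norm_sub_sq_sub (restrict (gradient L θ) S) g
  rw [inner_restrict_left_of_supp_subset hg] at hpolar
  rw [restrict_eq_self hg]
  linarith [mul_le_mul_of_nonneg_left hpolar hη.le]

/-- Let `L` be differentiable and restricted `L_s`-smooth at sparsity
level `s`, `|S| ≤ s`, `supp θ ⊆ S`, `supp g ⊆ S`, `η > 0`, `θ' = θ − η g`. Then
`L(θ') − L(θ) ≤ −(η/2)(1 − η L_s)‖g|_S‖² + (η/2)‖g|_S − (∇L θ)|_S‖²`. -/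
theorem descent_step_bound {d s : ℕ} (L : EuclideanSpace ℝ (Fin d) → ℝ) (Ls : ℝ)
    (hdiff : Differentiable ℝ L)
    (hsmooth : ∀ θ₁ θ₂ : EuclideanSpace ℝ (Fin d), norm0 θ₁ ≤ s → norm0 θ₂ ≤ s →
      L θ₁ ≤ L θ₂ + ⟪gradient L θ₂, θ₁ - θ₂⟫ + Ls / 2 * ‖θ₁ - θ₂‖ ^ 2)
    (S : Finset (Fin d)) (hS : S.card ≤ s)
    (θ g : EuclideanSpace ℝ (Fin d)) (hθ : supp θ ⊆ S) (hg : supp g ⊆ S)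
    (η : ℝ) (hη : 0 < η) :
    L (θ - η • g) - L θ ≤ -(η / 2) * (1 - η * Ls) * ‖restrict g S‖ ^ 2
      + η / 2 * ‖restrict g S - restrict (gradient L θ) S‖ ^ 2 :=
  descent_step_bound_general L Ls hsmooth S hS θ g hθ hg η hη
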